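/- arXiv:2004.13472 — 2 statements merged into one kernel-verified Lean document; each statement's English description precedes it below -/
import Mathlib

section
/- Suppose F : E ⥤ B is a Grothendieck fibration such that B has pullbacks, both E and B have terminal objects, and F preserves the terminal object. Then F has a full and faithful right adjoint q : B ⥤ E, where q(X) is defined as the domain of the cartesian lifting of the unique map X ⟶ 1 at the terminal object of E. -/
open CategoryTheory Limits

universe v₁ v₂ u₁ u₂

variable {E : Type u₁} {B : Type u₂} [Category.{v₁} E] [Category.{v₂} B]

/-- A morphism `f : X ⟶ Y` of `E` is *cartesian* with respect to a functor `F : E ⥤ B`. -/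
def IsCart (F : E ⥤ B) {X Y : E} (f : X ⟶ Y) : Prop :=
  ∀ ⦃Z : E⦄ (g : Z ⟶ Y) (b : F.obj Z ⟶ F.obj X),
    F.map g = b ≫ F.map f → ∃! u : Z ⟶ X, F.map u = b ∧ u ≫ f = g

/-- `F` is a Grothendieck fibration: every arrow `a : X ⟶ F(A)` of the base has a cartesian
lifting at `A`. -/
def IsGrothendieckFib (F : E ⥤ B) : Prop :=
  ∀ ⦃A : E⦄ ⦃X : B⦄ (a : X ⟶ F.obj A),
    ∃ (L : E) (f : L ⟶ A) (hL : F.obj L = X),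
      F.map f = eqToHom hL ≫ a ∧ IsCart F f

/-
If `t : Q ⟶ T` is cartesian and both `T` and `F T` are terminal, then every map `A ⟶ Q` is
determined by its image under `F` and every `F A ⟶ F Q` lifts, since the constraint `u ≫ t = !`
is vacuous. Choosing such a `Q X` over every `X` of the base therefore gives a natural bijection
`(F A ⟶ X) ≃ (A ⟶ Q X)`, i.e. a right adjoint `Q` of `F`. Its counit `F (Q X) ⟶ X` is the
identity (up to `F (Q X) = X`), so `Q` is fully faithful.
-/

namespace IsCart

theorem map_bijective_of_isTerminal {F : E ⥤ B} {Q T : E} {t : Q ⟶ T} (ht : IsCart F t)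
    (hT : IsTerminal T) (hFT : IsTerminal (F.obj T)) (A : E) :
    Function.Bijective (F.map : (A ⟶ Q) → (F.obj A ⟶ F.obj Q)) := by
  constructor
  · intro u v huv
    obtain ⟨w, -, hw⟩ := ht (hT.from A) (F.map v) (hFT.hom_ext _ _)
    exact (hw u ⟨huv, hT.hom_ext _ _⟩).trans (hw v ⟨rfl, hT.hom_ext _ _⟩).symm
  · intro b
    obtain ⟨u, ⟨hu, -⟩, -⟩ := ht (hT.from A) b (hFT.hom_ext _ _)
    exact ⟨u, hu⟩

variable {F : E ⥤ B} {T : E} (hT : IsTerminal T) (hFT : IsTerminal (F.obj T))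
  {Q : B → E} (hQ : ∀ X, F.obj (Q X) = X) {t : ∀ X, Q X ⟶ T} (ht : ∀ X, IsCart F (t X))

noncomputable def homEquivOfIsTerminal (A : E) (X : B) : (F.obj A ⟶ X) ≃ (A ⟶ Q X) :=
  ((Iso.refl _).homCongr (eqToIso (hQ X)).symm).trans
    (Equiv.ofBijective _ ((ht X).map_bijective_of_isTerminal hT hFT A)).symm

lemma map_homEquivOfIsTerminal {A : E} {X : B} (b : F.obj A ⟶ X) :
    F.map (homEquivOfIsTerminal hT hFT hQ ht A X b) = b ≫ eqToHom (hQ X).symm := by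
  simp [homEquivOfIsTerminal, Equiv.ofBijective_apply_symm_apply]

lemma homEquivOfIsTerminal_naturality {A' A : E} {X : B} (f : A' ⟶ A) (b : F.obj A ⟶ X) :
    homEquivOfIsTerminal hT hFT hQ ht A' X (F.map f ≫ b) =
      f ≫ homEquivOfIsTerminal hT hFT hQ ht A X b :=
  ((ht X).map_bijective_of_isTerminal hT hFT A').1 (by simp [map_homEquivOfIsTerminal])

noncomputable def adjunctionOfIsTerminal :
    F ⊣ Adjunction.rightAdjointOfEquiv (homEquivOfIsTerminal hT hFT hQ ht)
      fun _ _ _ => homEquivOfIsTerminal_naturality hT hFT hQ ht :=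
  Adjunction.adjunctionOfEquivRight _ _

lemma adjunctionOfIsTerminal_counit_app (X : B) :
    (adjunctionOfIsTerminal hT hFT hQ ht).counit.app X = eqToHom (hQ X) := by
  rw [adjunctionOfIsTerminal, Adjunction.adjunctionOfEquivRight_counit_app, Equiv.symm_apply_eq]
  apply ((ht X).map_bijective_of_isTerminal hT hFT _).1
  simp [map_homEquivOfIsTerminal]

instance isIso_counit_adjunctionOfIsTerminal :
    IsIso (adjunctionOfIsTerminal hT hFT hQ ht).counit :=
  have (X : B) : IsIso ((adjunctionOfIsTerminal hT hFT hQ ht).counit.app X) := by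
    rw [adjunctionOfIsTerminal_counit_app]
    infer_instance
  NatIso.isIso_of_isIso_app _

end IsCart

theorem pullbackFib_has_ff_right_adjoint_general
    (F : E ⥤ B) [HasTerminal E]
    (hfib : IsGrothendieckFib F)
    (hterm : IsTerminal (F.obj (⊤_ E))) :
    ∃ (q : B ⥤ E) (_adj : F ⊣ q), q.Full ∧ q.Faithful ∧
      ∀ X : B, ∃ (_ : F.obj (q.obj X) = X) (t : q.obj X ⟶ ⊤_ E), IsCart F t := by
  choose Q t hQ _ ht using fun X : B => hfib (A := ⊤_ E) (hterm.from X)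
  let adj := IsCart.adjunctionOfIsTerminal terminalIsTerminal hterm hQ ht
  have hq := adj.fullyFaithfulROfIsIsoCounit
  exact ⟨_, adj, hq.full, hq.faithful, fun X => ⟨hQ X, t X, ht X⟩⟩

/-- Fact 2.4 (⟹ direction): a Grothendieck fibration `F : E ⥤ B` such that `B` has pullbacks,
`E` and `B` have terminal objects, and `F` preserves the terminal object, has a full and
faithful right adjoint `q`, where each `q(X)` is the domain of a cartesian lifting of the
unique map `X ⟶ 1` at the terminal object of `E` (so `F (q X) = X` and the unique map
`q X ⟶ ⊤_E` is cartesian). -/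
theorem pullbackFib_has_ff_right_adjoint
    (F : E ⥤ B) [HasTerminal E] [HasTerminal B] [HasPullbacks B]
    (hfib : IsGrothendieckFib F)
    (hterm : IsTerminal (F.obj (⊤_ E))) :
    ∃ (q : B ⥤ E) (_adj : F ⊣ q), q.Full ∧ q.Faithful ∧
      ∀ X : B, ∃ (_ : F.obj (q.obj X) = X) (t : q.obj X ⟶ ⊤_ E), IsCart F t :=
  pullbackFib_has_ff_right_adjoint_general F hfib hterm
end

section
/- Let ⋔ : E ⥤ B be a state-parameter fibration with parameterized-unit functor p. For any two morphisms X ⟶ Y and Z ⟶ Y in B, we have p(X ×_Y Z) ≅ p(X) ⊗_{qY} p(Z), where ⊗_{qY} is the fibered monoidal product over qY. -/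
open CategoryTheory Limits MonoidalCategory MonoidalClosed

universe v₁ v₂ u₁ u₂

variable {E : Type u₁} {B : Type u₂} [Category.{v₁} E] [Category.{v₂} B]

/-- A *state-parameter fibration* (Definition 2.10): a pullback fibration `⋔ = sharp` from a
symmetric monoidal closed category `E` of states to a locally cartesian closed category `B`
of parameters, such that `⋔` preserves the monoidal closed structure, the tensor product of
cartesian arrows is cartesian, each slice `E/qX` is monoidal closed via the fibered tensor
`⊗_{qX}` and fibered hom `⊸_{qX}` (given by cartesian liftings), together with the
parameterized-terminal functor `q` (full and faithful right adjoint of `⋔` with identity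
counit), the parameterized-unit functor `p` (cartesian liftings of the unique maps to the
terminal object, with `p 1 = I`), and a right adjoint `♭` of `p`. -/
structure StateParamFib (E : Type u₁) (B : Type u₂) [Category.{v₁} E] [Category.{v₂} B]
    [MonoidalCategory E] [SymmetricCategory E] [MonoidalClosed E] [HasTerminal E]
    [CartesianMonoidalCategory B] [MonoidalClosed B] [HasPullbacks B] where
  /-- the fibration `⋔ : E ⥤ B` -/
  sharp : E ⥤ B
  /-- `⋔` is a Grothendieck fibration -/
  isFib : ∀ ⦃A : E⦄ ⦃X : B⦄ (a : X ⟶ sharp.obj A),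
    ∃ (L : E) (f : L ⟶ A) (hL : sharp.obj L = X),
      sharp.map f = eqToHom hL ≫ a ∧ IsCart sharp f
  /-- `⋔` preserves the terminal object -/
  presTerminal : IsTerminal (sharp.obj (⊤_ E))
  /-- `B` is locally cartesian closed -/
  overCFP : ∀ X : B, CartesianMonoidalCategory (Over X)
  overCC : ∀ X : B, @MonoidalClosed (Over X) _ (overCFP X).toMonoidalCategory
  /-- `⋔` is a monoidal closed functor -/
  sharpUnitIso : sharp.obj (𝟙_ E) ≅ 𝟙_ B
  sharpTensorIso : ∀ A C : E, sharp.obj (A ⊗ C) ≅ sharp.obj A ⊗ sharp.obj C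
  sharpHomIso : ∀ A C : E,
    sharp.obj ((ihom A).obj C) ≅ (ihom (sharp.obj A)).obj (sharp.obj C)
  /-- the tensor product of cartesian arrows is cartesian -/
  tensorCart : ∀ {A A' C C' : E} (f : A ⟶ A') (g : C ⟶ C'),
    IsCart sharp f → IsCart sharp g → IsCart sharp (f ⊗ₘ g)
  /-- the parameterized-terminal functor `q`, a full and faithful right adjoint of `⋔`
  whose counit is strictly the identity -/
  q : B ⥤ E
  adj : sharp ⊣ q
  qFull : q.Full
  qFaithful : q.Faithful
  sharpQObj : ∀ X : B, sharp.obj (q.obj X) = X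
  counitId : ∀ X : B, adj.counit.app X = eqToHom (sharpQObj X)
  /-- the parameterized-unit functor `p`, with `p 1 = I`, given by cartesian liftings -/
  p : B ⥤ E
  pTop : p.obj (𝟙_ B) = 𝟙_ E
  sharpPObj : ∀ X : B, sharp.obj (p.obj X) = X
  sharpPMap : ∀ {X Y : B} (f : X ⟶ Y),
    sharp.map (p.map f) = eqToHom (sharpPObj X) ≫ f ≫ eqToHom (sharpPObj Y).symm
  pCart : ∀ {X Y : B} (f : X ⟶ Y), IsCart sharp (p.map f)
  /-- the right adjoint `♭` of `p` -/
  flat : E ⥤ B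
  padj : p ⊣ flat
  /-- the fibered monoidal product `A ⊗_{qX} C` of objects `a : A ⟶ q X`, `c : C ⟶ q X`
  of `E / q X`: the cartesian lifting of the inclusion `⋔A ×_X ⋔C ↪ ⋔A × ⋔C` at `A ⊗ C` -/
  ft : ∀ {X : B} (A C : E), (A ⟶ q.obj X) → (C ⟶ q.obj X) → E
  ftHom : ∀ {X : B} {A C : E} (a : A ⟶ q.obj X) (c : C ⟶ q.obj X), ft A C a c ⟶ A ⊗ C
  ftCart : ∀ {X : B} {A C : E} (a : A ⟶ q.obj X) (c : C ⟶ q.obj X), IsCart sharp (ftHom a c)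
  ftBase : ∀ {X : B} {A C : E} (a : A ⟶ q.obj X) (c : C ⟶ q.obj X),
    sharp.obj (ft A C a c) =
      pullback (sharp.map a ≫ eqToHom (sharpQObj X)) (sharp.map c ≫ eqToHom (sharpQObj X))
  ftMapEq : ∀ {X : B} {A C : E} (a : A ⟶ q.obj X) (c : C ⟶ q.obj X),
    sharp.map (ftHom a c) = eqToHom (ftBase a c) ≫
      CartesianMonoidalCategory.lift (pullback.fst _ _) (pullback.snd _ _) ≫ (sharpTensorIso A C).inv
  /-- the structure map `A ⊗_{qX} C ⟶ q X` -/
  ftP : ∀ {X : B} {A C : E} (a : A ⟶ q.obj X) (c : C ⟶ q.obj X), ft A C a c ⟶ q.obj X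
  ftP_eq : ∀ {X : B} {A C : E} (a : A ⟶ q.obj X) (c : C ⟶ q.obj X),
    ftP a c = adj.homEquiv _ _
      (eqToHom (ftBase a c) ≫ pullback.fst _ _ ≫ sharp.map a ≫ eqToHom (sharpQObj X))
  /-- the projection of `A ⊗_{qX} C` to the parameterized terminal `q (⋔ C)` of the second
  factor (used for dependent monoidal products) -/
  ftPR : ∀ {X : B} {A C : E} (a : A ⟶ q.obj X) (c : C ⟶ q.obj X),
    ft A C a c ⟶ q.obj (sharp.obj C)
  ftPR_eq : ∀ {X : B} {A C : E} (a : A ⟶ q.obj X) (c : C ⟶ q.obj X),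
    ftPR a c = adj.homEquiv _ _ (eqToHom (ftBase a c) ≫ pullback.snd _ _)
  /-- functoriality of the fibered tensor in the first variable, over `q X` -/
  ftMapL : ∀ {X : B} {A A' C : E} {a : A ⟶ q.obj X} {a' : A' ⟶ q.obj X}
    (c : C ⟶ q.obj X) (g : A ⟶ A'), g ≫ a' = a → (ft A C a c ⟶ ft A' C a' c)
  ftMapL_comm : ∀ {X : B} {A A' C : E} {a : A ⟶ q.obj X} {a' : A' ⟶ q.obj X}
    (c : C ⟶ q.obj X) (g : A ⟶ A') (hg : g ≫ a' = a),
    ftMapL c g hg ≫ ftHom a' c = ftHom a c ≫ (g ⊗ₘ 𝟙 C)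
  /-- the fibered function space `A ⊸_{qX} C` -/
  fh : ∀ {X : B} (A C : E), (A ⟶ q.obj X) → (C ⟶ q.obj X) → E
  fhProj : ∀ {X : B} {A C : E} (a : A ⟶ q.obj X) (c : C ⟶ q.obj X), fh A C a c ⟶ q.obj X
  /-- evaluation (counit of `- ⊗_{qX} A ⊣ A ⊸_{qX} -`) -/
  fhEv : ∀ {X : B} {A C : E} (a : A ⟶ q.obj X) (c : C ⟶ q.obj X),
    ft (fh A C a c) A (fhProj a c) a ⟶ C
  fhEv_over : ∀ {X : B} {A C : E} (a : A ⟶ q.obj X) (c : C ⟶ q.obj X),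
    fhEv a c ≫ c = ftP (fhProj a c) a
  /-- each slice `E / q X` is monoidal closed: `- ⊗_{qX} A ⊣ A ⊸_{qX} -` -/
  fhUP : ∀ {X : B} {A C D : E} (a : A ⟶ q.obj X) (c : C ⟶ q.obj X) (d : D ⟶ q.obj X)
    (f : ft D A d a ⟶ C), f ≫ c = ftP d a →
    ∃! g : {g : D ⟶ fh A C a c // g ≫ fhProj a c = d},
      ftMapL a g.1 g.2 ≫ fhEv a c = f

namespace IsCart

variable {F : E ⥤ B}

lemma of_isIso {A C : E} (f : A ⟶ C) [IsIso f] : IsCart F f := by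
  intro Z g b hb
  refine ⟨g ≫ inv f, ⟨?_, by simp⟩, fun u ⟨_, hu⟩ => by simp [← hu]⟩
  rw [F.map_comp, hb, Category.assoc, ← F.map_comp, IsIso.hom_inv_id, F.map_id,
    Category.comp_id]

lemma comp {A C D : E} {f : A ⟶ C} {g : C ⟶ D} (hf : IsCart F f) (hg : IsCart F g) :
    IsCart F (f ≫ g) := by
  intro Z h b hb
  obtain ⟨v, ⟨hv, hvg⟩, hv_uniq⟩ :=
    hg h (b ≫ F.map f) (by rw [hb, F.map_comp, Category.assoc])
  obtain ⟨u, ⟨hu, huf⟩, hu_uniq⟩ := hf v b hv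
  refine ⟨u, ⟨hu, by rw [← Category.assoc, huf, hvg]⟩,
    fun w ⟨hw, hwfg⟩ => hu_uniq w ⟨hw, ?_⟩⟩
  exact hv_uniq _ ⟨by rw [F.map_comp, hw], by rw [Category.assoc, hwfg]⟩

lemma hom_ext {A C Z : E} {f : A ⟶ C} (hf : IsCart F f) {u₁ u₂ : Z ⟶ A}
    (hF : F.map u₁ = F.map u₂) (hu : u₁ ≫ f = u₂ ≫ f) : u₁ = u₂ :=
  (hf (u₂ ≫ f) (F.map u₂) (F.map_comp _ _)).unique ⟨hF, hu⟩ ⟨rfl, rfl⟩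

lemma nonempty_iso {A A' C : E} {f : A ⟶ C} {f' : A' ⟶ C} (hf : IsCart F f)
    (hf' : IsCart F f') (e : F.obj A ≅ F.obj A') (he : e.hom ≫ F.map f' = F.map f) :
    Nonempty (A ≅ A') := by
  obtain ⟨u, ⟨hu, huf⟩, -⟩ := hf' f e.hom he.symm
  obtain ⟨v, ⟨hv, hvf⟩, -⟩ := hf f' e.inv (by rw [← he, e.inv_hom_id_assoc])
  refine ⟨⟨u, v, hf.hom_ext ?_ ?_, hf'.hom_ext ?_ ?_⟩⟩ <;>
    simp [hu, hv, huf, hvf]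

end IsCart

namespace StateParamFib

variable [MonoidalCategory E] [SymmetricCategory E] [MonoidalClosed E] [HasTerminal E]
  [CartesianMonoidalCategory B] [MonoidalClosed B] [HasPullbacks B] (S : StateParamFib E B)

lemma hom_ext_sharp_unit {U : B} (h₁ h₂ : U ⟶ S.sharp.obj (𝟙_ E)) : h₁ = h₂ :=
  (cancel_mono S.sharpUnitIso.hom).1 (CartesianMonoidalCategory.toUnit_unique _ _)

lemma sharp_map_homEquiv {A : E} {Y : B} (h : S.sharp.obj A ⟶ Y) :
    S.sharp.map (S.adj.homEquiv A Y h) ≫ eqToHom (S.sharpQObj Y) = h := by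
  rw [← S.counitId, ← Adjunction.homEquiv_counit, Equiv.symm_apply_apply]

noncomputable def pToUnit (W : B) : S.p.obj W ⟶ 𝟙_ E :=
  S.p.map (CartesianMonoidalCategory.toUnit W) ≫ eqToHom S.pTop

lemma isCart_pToUnit (W : B) : IsCart S.sharp (S.pToUnit W) :=
  (S.pCart _).comp (IsCart.of_isIso _)

lemma isCart_ftHom_tensor_toUnit {Y : B} {A C : E} (a : A ⟶ S.q.obj Y) (c : C ⟶ S.q.obj Y)
    {tA : A ⟶ 𝟙_ E} {tC : C ⟶ 𝟙_ E} (hA : IsCart S.sharp tA) (hC : IsCart S.sharp tC) :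
    IsCart S.sharp (S.ftHom a c ≫ (tA ⊗ₘ tC) ≫ (λ_ (𝟙_ E)).hom) :=
  (S.ftCart a c).comp ((S.tensorCart _ _ hA hC).comp (IsCart.of_isIso _))

/-- The base of `p X ⊗_{qY} p Z` is `X ×_Y Z`. -/
noncomputable def sharpFtTransposeIso {X Y Z : B} (f : X ⟶ Y) (g : Z ⟶ Y) :
    S.sharp.obj (S.ft (S.p.obj X) (S.p.obj Z)
        (S.adj.homEquiv _ _ (eqToHom (S.sharpPObj X) ≫ f))
        (S.adj.homEquiv _ _ (eqToHom (S.sharpPObj Z) ≫ g))) ≅ pullback f g :=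
  eqToIso (S.ftBase _ _) ≪≫
    pullback.congrHom (S.sharp_map_homEquiv _) (S.sharp_map_homEquiv _) ≪≫
    asIso (pullback.map _ _ f g (eqToHom (S.sharpPObj X)) (eqToHom (S.sharpPObj Z)) (𝟙 Y)
      (by simp) (by simp))

end StateParamFib

/-- Theorem B.1: the parameterized-unit functor `p` maps fibered products to fibered
monoidal products: for `f : X ⟶ Y` and `g : Z ⟶ Y` in `B`,
`p (X ×_Y Z) ≅ p X ⊗_{qY} p Z`, where `p X` and `p Z` lie over `q Y` via the transposes of
`f` and `g`. -/
theorem p_fibered_product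
    [MonoidalCategory E] [SymmetricCategory E] [MonoidalClosed E] [HasTerminal E]
    [CartesianMonoidalCategory B] [MonoidalClosed B] [HasPullbacks B]
    (S : StateParamFib E B) {X Y Z : B} (f : X ⟶ Y) (g : Z ⟶ Y) :
    Nonempty (S.p.obj (pullback f g) ≅
      S.ft (S.p.obj X) (S.p.obj Z)
        (S.adj.homEquiv _ _ (eqToHom (S.sharpPObj X) ≫ f))
        (S.adj.homEquiv _ _ (eqToHom (S.sharpPObj Z) ≫ g))) :=
  -- both are cartesian lifts at `I` of `X ×_Y Z ⟶ 1`; they lie over the same base map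
  -- automatically because `⋔ I ≅ 1` is terminal
  IsCart.nonempty_iso (S.isCart_pToUnit _)
    (S.isCart_ftHom_tensor_toUnit _ _ (S.isCart_pToUnit X) (S.isCart_pToUnit Z))
    (eqToIso (S.sharpPObj _) ≪≫ (S.sharpFtTransposeIso f g).symm) (S.hom_ext_sharp_unit _ _)
end
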